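/- For all A, B ∈ SL(2,ℂ) there exist proper orthochronous Lorentz matrices L_A and L_B (depending only on A, respectively B) such that for every Hermitian 4×4 complex matrix ρ one has R_{(A⊗B)ρ(A⊗B)†} = L_A · R_ρ · L_Bᵀ, where ⊗ denotes the Kronecker product and (A⊗B)† the conjugate transpose. -/

import Mathlib

open Matrix Kronecker

noncomputable section

/-- The Pauli matrices σ₀ = I, σ₁, σ₂, σ₃. -/
def pauli : Fin 4 → Matrix (Fin 2) (Fin 2) ℂ :=
  ![1, !![0, 1; 1, 0], !![0, -Complex.I; Complex.I, 0], !![1, 0; 0, -1]]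

/-- The Minkowski metric η = diag(1,-1,-1,-1). -/
def η : Matrix (Fin 4) (Fin 4) ℝ := Matrix.diagonal ![1, -1, -1, -1]

/-- A proper orthochronous Lorentz matrix. -/
def LorentzPO (L : Matrix (Fin 4) (Fin 4) ℝ) : Prop :=
  Lᵀ * η * L = η ∧ L.det = 1 ∧ 1 ≤ L 0 0

/-- The R-matrix of a 4×4 complex matrix: R_{ij} = Tr(ρ (σ_i ⊗ σ_j)). -/
def Rmat (ρ : Matrix (Fin 2 × Fin 2) (Fin 2 × Fin 2) ℂ) : Matrix (Fin 4) (Fin 4) ℝ :=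
  Matrix.of fun i j => ((ρ * (pauli i ⊗ₖ pauli j)).trace).re

/-! ### auxiliary material -/

lemma I3 : Complex.I ^ 3 = -Complex.I := by
  rw [pow_succ, Complex.I_sq]; ring

/-- completeness of the Pauli basis -/
lemma pauli_expand (M : Matrix (Fin 2) (Fin 2) ℂ) :
    M = ∑ k : Fin 4, ((2:ℂ)⁻¹ * (pauli k * M).trace) • pauli k := by
  ext i j
  fin_cases i <;> fin_cases j <;>
    simp [pauli, Matrix.trace, Matrix.diag, Matrix.mul_apply, Fin.sum_univ_four,
      Fin.sum_univ_two] <;> ring_nf <;> simp [Complex.I_sq] <;> ring_nf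

lemma pauli_herm (k : Fin 4) : (pauli k)ᴴ = pauli k := by
  fin_cases k <;> ext i j <;> fin_cases i <;> fin_cases j <;>
    simp [pauli, Matrix.conjTranspose_apply]

/-- the complex-valued Lorentz-matrix candidate -/
def Lc (A : Matrix (Fin 2) (Fin 2) ℂ) : Matrix (Fin 4) (Fin 4) ℂ :=
  Matrix.of fun i k => (2:ℂ)⁻¹ * (pauli k * (Aᴴ * pauli i * A)).trace

/-- the real-valued Lorentz-matrix candidate -/
def Lr (A : Matrix (Fin 2) (Fin 2) ℂ) : Matrix (Fin 4) (Fin 4) ℝ :=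
  Matrix.of fun i k => ((2:ℂ)⁻¹ * (pauli k * (Aᴴ * pauli i * A)).trace).re

lemma Lc_real (A : Matrix (Fin 2) (Fin 2) ℂ) :
    (Lr A).map Complex.ofReal = Lc A := by
  ext i k
  have hH : (Aᴴ * pauli i * A)ᴴ = Aᴴ * pauli i * A := by
    simp [Matrix.conjTranspose_mul, pauli_herm, Matrix.mul_assoc]
  have h : (starRingEnd ℂ) ((pauli k * (Aᴴ * pauli i * A)).trace)
      = (pauli k * (Aᴴ * pauli i * A)).trace := by
    calc (starRingEnd ℂ) ((pauli k * (Aᴴ * pauli i * A)).trace)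
        = ((pauli k * (Aᴴ * pauli i * A))ᴴ).trace := by
          rw [Matrix.trace_conjTranspose]; rfl
      _ = ((Aᴴ * pauli i * A) * pauli k).trace := by
          rw [Matrix.conjTranspose_mul, hH, pauli_herm]
      _ = (pauli k * (Aᴴ * pauli i * A)).trace := Matrix.trace_mul_comm _ _
  have h2 : (starRingEnd ℂ) (Lc A i k) = Lc A i k := by
    simp only [Lc, Matrix.of_apply, RingHom.map_mul, h, map_inv₀, map_ofNat]
  simp only [Lr, Lc, Matrix.map_apply, Matrix.of_apply]
  exact Complex.conj_eq_iff_re.mp h2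

set_option maxHeartbeats 1000000 in
lemma Lc_lorentz (A : Matrix (Fin 2) (Fin 2) ℂ) :
    (Lc A)ᵀ * (η.map Complex.ofReal) * Lc A = (A.det * Aᴴ.det) • (η.map Complex.ofReal) := by
  ext k l
  fin_cases k <;> fin_cases l <;>
    simp [Lc, pauli, η, Matrix.trace, Matrix.diag, Matrix.mul_apply, Matrix.map_apply,
      Matrix.conjTranspose_apply, Matrix.det_fin_two, Matrix.diagonal, Fin.sum_univ_four,
      Fin.sum_univ_two, Matrix.smul_apply, smul_eq_mul] <;> ring_nf <;>
    simp [Complex.I_sq, I3] <;> ring_nf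

/-! ### determinant via change of basis -/

lemma my_det_fin_four (M : Matrix (Fin 4) (Fin 4) ℂ) : M.det =
    M 0 0 * (M 1 1 * (M 2 2 * M 3 3 - M 2 3 * M 3 2) - M 1 2 * (M 2 1 * M 3 3 - M 2 3 * M 3 1)
      + M 1 3 * (M 2 1 * M 3 2 - M 2 2 * M 3 1))
  - M 0 1 * (M 1 0 * (M 2 2 * M 3 3 - M 2 3 * M 3 2) - M 1 2 * (M 2 0 * M 3 3 - M 2 3 * M 3 0)
      + M 1 3 * (M 2 0 * M 3 2 - M 2 2 * M 3 0))
  + M 0 2 * (M 1 0 * (M 2 1 * M 3 3 - M 2 3 * M 3 1) - M 1 1 * (M 2 0 * M 3 3 - M 2 3 * M 3 0)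
      + M 1 3 * (M 2 0 * M 3 1 - M 2 1 * M 3 0))
  - M 0 3 * (M 1 0 * (M 2 1 * M 3 2 - M 2 2 * M 3 1) - M 1 1 * (M 2 0 * M 3 2 - M 2 2 * M 3 0)
      + M 1 2 * (M 2 0 * M 3 1 - M 2 1 * M 3 0)) := by
  rw [Matrix.det_succ_row_zero]
  simp [Fin.sum_univ_succ, Matrix.det_fin_three, Matrix.submatrix_apply,
    show Fin.succAbove (1:Fin 4) (2:Fin 3) = 3 by decide, show Fin.succAbove (2:Fin 4) (2:Fin 3) = 3 by decide,
    show Fin.succAbove (3:Fin 4) (2:Fin 3) = 2 by decide]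
  ring


/-- the conjugation map X ↦ Aᴴ X A as a linear endomorphism -/
def conjMap (A : Matrix (Fin 2) (Fin 2) ℂ) :
    Matrix (Fin 2) (Fin 2) ℂ →ₗ[ℂ] Matrix (Fin 2) (Fin 2) ℂ where
  toFun X := Aᴴ * X * A
  map_add' X Y := by rw [Matrix.mul_add, Matrix.add_mul]
  map_smul' c X := by simp [Matrix.mul_smul, Matrix.smul_mul]

/-- the standard coordinates on 2×2 matrices -/
def e0 : Matrix (Fin 2) (Fin 2) ℂ ≃ₗ[ℂ] (Fin 4 → ℂ) where
  toFun M := ![M 0 0, M 0 1, M 1 0, M 1 1]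
  map_add' M N := by funext k; fin_cases k <;> simp
  map_smul' c M := by funext k; fin_cases k <;> simp
  invFun c := !![c 0, c 1; c 2, c 3]
  left_inv M := by ext i j; fin_cases i <;> fin_cases j <;> simp
  right_inv c := by funext k; fin_cases k <;> simp

/-- the Pauli coordinates on 2×2 matrices -/
def eP : Matrix (Fin 2) (Fin 2) ℂ ≃ₗ[ℂ] (Fin 4 → ℂ) where
  toFun M := fun k => (2:ℂ)⁻¹ * (pauli k * M).trace
  map_add' M N := by funext k; simp [Matrix.mul_add]; ring
  map_smul' c M := by funext k; simp [Matrix.mul_smul]; ring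
  invFun c := ∑ k, c k • pauli k
  left_inv M := (pauli_expand M).symm
  right_inv c := by
    funext k
    fin_cases k <;>
      simp [pauli, Matrix.trace, Matrix.diag, Matrix.mul_apply, Fin.sum_univ_four,
        Fin.sum_univ_two, Matrix.sum_apply] <;> ring_nf <;>
      simp [Complex.I_sq, I3] <;> ring_nf

lemma eP_symm_single (i : Fin 4) : eP.symm (Pi.single i 1) = pauli i := by
  show (∑ k, (Pi.single i 1 : Fin 4 → ℂ) k • pauli k) = pauli i
  simp [Pi.single_apply, ite_smul]

lemma toMatrix_eP (A : Matrix (Fin 2) (Fin 2) ℂ) :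
    LinearMap.toMatrix (Module.Basis.ofEquivFun eP) (Module.Basis.ofEquivFun eP) (conjMap A) = (Lc A)ᵀ := by
  ext k i
  rw [LinearMap.toMatrix_apply]
  simp only [Module.Basis.coe_ofEquivFun, Module.Basis.ofEquivFun_repr_apply, eP_symm_single]
  rfl

set_option maxHeartbeats 1000000 in
lemma toMatrix_e0_det (A : Matrix (Fin 2) (Fin 2) ℂ) :
    (LinearMap.toMatrix (Module.Basis.ofEquivFun e0) (Module.Basis.ofEquivFun e0) (conjMap A)).det
      = A.det ^ 2 * Aᴴ.det ^ 2 := by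
  have hM : LinearMap.toMatrix (Module.Basis.ofEquivFun e0) (Module.Basis.ofEquivFun e0) (conjMap A)
      = !![star (A 0 0) * A 0 0, star (A 0 0) * A 1 0, star (A 1 0) * A 0 0, star (A 1 0) * A 1 0;
           star (A 0 0) * A 0 1, star (A 0 0) * A 1 1, star (A 1 0) * A 0 1, star (A 1 0) * A 1 1;
           star (A 0 1) * A 0 0, star (A 0 1) * A 1 0, star (A 1 1) * A 0 0, star (A 1 1) * A 1 0;
           star (A 0 1) * A 0 1, star (A 0 1) * A 1 1, star (A 1 1) * A 0 1, star (A 1 1) * A 1 1] := by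
    ext k j
    rw [LinearMap.toMatrix_apply]
    simp only [Module.Basis.coe_ofEquivFun, Module.Basis.ofEquivFun_repr_apply]
    fin_cases k <;> fin_cases j <;>
      simp [e0, conjMap, Matrix.mul_apply, Fin.sum_univ_two, Matrix.conjTranspose_apply,
        Pi.single_apply]
  rw [hM, my_det_fin_four]
  simp [Matrix.det_fin_two, Matrix.conjTranspose_apply]
  ring

lemma Lc_det (A : Matrix (Fin 2) (Fin 2) ℂ) :
    (Lc A).det = A.det ^ 2 * Aᴴ.det ^ 2 := by
  have h := LinearMap.det_toMatrix_eq_det_toMatrix (Module.Basis.ofEquivFun eP) (Module.Basis.ofEquivFun e0)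
    (conjMap A)
  rw [toMatrix_eP, toMatrix_e0_det, Matrix.det_transpose] at h
  exact h

/-! ### Kronecker helpers -/

lemma kron_conjT (M N : Matrix (Fin 2) (Fin 2) ℂ) : (M ⊗ₖ N)ᴴ = Mᴴ ⊗ₖ Nᴴ := by
  ext ⟨i, j⟩ ⟨k, l⟩
  simp [Matrix.conjTranspose_apply, Matrix.kroneckerMap_apply, star_mul']

lemma sum_kron (f : Fin 4 → Matrix (Fin 2) (Fin 2) ℂ) (N : Matrix (Fin 2) (Fin 2) ℂ) :
    (∑ k, f k) ⊗ₖ N = ∑ k, f k ⊗ₖ N := by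
  ext ⟨i, j⟩ ⟨k, l⟩
  simp [Matrix.kroneckerMap_apply, Matrix.sum_apply, Finset.sum_mul]

lemma kron_sum (M : Matrix (Fin 2) (Fin 2) ℂ) (f : Fin 4 → Matrix (Fin 2) (Fin 2) ℂ) :
    M ⊗ₖ (∑ k, f k) = ∑ k, M ⊗ₖ f k := by
  ext ⟨i, j⟩ ⟨k, l⟩
  simp [Matrix.kroneckerMap_apply, Matrix.sum_apply, Finset.mul_sum]

lemma trace_key (A B : Matrix (Fin 2) (Fin 2) ℂ)
    (ρ : Matrix (Fin 2 × Fin 2) (Fin 2 × Fin 2) ℂ) (i j : Fin 4) :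
    (((A ⊗ₖ B) * ρ * (A ⊗ₖ B)ᴴ) * (pauli i ⊗ₖ pauli j)).trace
      = ∑ k, ∑ l, (Lc A i k * Lc B j l) * (ρ * (pauli k ⊗ₖ pauli l)).trace := by
  have h1 : (((A ⊗ₖ B) * ρ * (A ⊗ₖ B)ᴴ) * (pauli i ⊗ₖ pauli j)).trace
      = (ρ * (((Aᴴ * pauli i * A) ⊗ₖ (Bᴴ * pauli j * B)))).trace := by
    rw [Matrix.mul_assoc ((A ⊗ₖ B) * ρ), Matrix.trace_mul_comm, ← Matrix.mul_assoc,
      Matrix.trace_mul_comm, kron_conjT, Matrix.mul_kronecker_mul, Matrix.mul_kronecker_mul]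
  rw [h1]
  have hA2 : Aᴴ * pauli i * A = ∑ k, Lc A i k • pauli k := by
    conv_lhs => rw [pauli_expand (Aᴴ * pauli i * A)]
    rfl
  have hB2 : Bᴴ * pauli j * B = ∑ l, Lc B j l • pauli l := by
    conv_lhs => rw [pauli_expand (Bᴴ * pauli j * B)]
    rfl
  rw [hA2, hB2, sum_kron]
  simp only [kron_sum, Matrix.smul_kronecker, Matrix.kronecker_smul, smul_smul,
    Matrix.mul_sum, Matrix.mul_smul, Matrix.trace_sum, Matrix.trace_smul, smul_eq_mul]
  simp [Finset.mul_sum, mul_assoc]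

/-! ### the real matrix is proper orthochronous -/

lemma map_ofReal_inj {M N : Matrix (Fin 4) (Fin 4) ℝ}
    (h : M.map Complex.ofReal = N.map Complex.ofReal) : M = N := by
  ext i j
  have := congrArg (fun X => X i j) h
  simpa [Matrix.map_apply] using this

lemma Lr_lorentz_eq (A : Matrix (Fin 2) (Fin 2) ℂ) (hA : A.det = 1) :
    (Lr A)ᵀ * η * Lr A = η := by
  have hAH : Aᴴ.det = 1 := by rw [Matrix.det_conjTranspose, hA]; simp
  apply map_ofReal_inj
  have : ((Lr A)ᵀ * η * Lr A).map (Complex.ofRealHom : ℝ →+* ℂ)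
      = ((Lr A)ᵀ.map Complex.ofRealHom) * (η.map Complex.ofRealHom) * ((Lr A).map Complex.ofRealHom) := by
    rw [Matrix.map_mul, Matrix.map_mul]
  simp only [show ⇑Complex.ofRealHom = (Complex.ofReal : ℝ → ℂ) from rfl] at this
  rw [show ((Lr A)ᵀ * η * Lr A).map (Complex.ofReal : ℝ → ℂ)
      = ((Lr A)ᵀ.map Complex.ofReal) * (η.map Complex.ofReal) * ((Lr A).map Complex.ofReal) from this,
    Matrix.transpose_map, Lc_real, Lc_lorentz, hA, hAH]
  simp

lemma Lr_det (A : Matrix (Fin 2) (Fin 2) ℂ) (hA : A.det = 1) : (Lr A).det = 1 := by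
  have hAH : Aᴴ.det = 1 := by rw [Matrix.det_conjTranspose, hA]; simp
  have h := RingHom.map_det (Complex.ofRealHom : ℝ →+* ℂ) (Lr A)
  rw [RingHom.mapMatrix_apply] at h
  simp only [show ⇑Complex.ofRealHom = (Complex.ofReal : ℝ → ℂ) from rfl] at h
  rw [show (Lr A).map (Complex.ofReal : ℝ → ℂ) = Lc A from Lc_real A, Lc_det, hA, hAH] at h
  norm_num at h
  exact_mod_cast h

lemma Lr_00 (A : Matrix (Fin 2) (Fin 2) ℂ) (hA : A.det = 1) : 1 ≤ Lr A 0 0 := by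
  have hdet : A 0 0 * A 1 1 - A 0 1 * A 1 0 = 1 := by rw [← Matrix.det_fin_two]; exact hA
  have h2 : Complex.normSq (A 0 0 * A 1 1 - A 0 1 * A 1 0) = 1 := by rw [hdet]; simp
  have hL : Lr A 0 0 = 2⁻¹ * (Complex.normSq (A 0 0) + Complex.normSq (A 0 1)
      + Complex.normSq (A 1 0) + Complex.normSq (A 1 1)) := by
    simp [Lr, pauli, Matrix.trace, Matrix.diag, Matrix.mul_apply, Matrix.conjTranspose_apply,
      Fin.sum_univ_two, Matrix.one_apply, Complex.normSq_apply, Complex.mul_re, Complex.mul_im]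
    ring
  have hlag : (Complex.normSq (A 0 0) + Complex.normSq (A 0 1)) *
      (Complex.normSq (A 1 0) + Complex.normSq (A 1 1))
      = Complex.normSq (A 0 0 * A 1 1 - A 0 1 * A 1 0)
        + Complex.normSq (A 0 0 * star (A 1 0) + A 0 1 * star (A 1 1)) := by
    simp [Complex.normSq_apply, Complex.mul_re, Complex.mul_im, Complex.star_def,
      Complex.conj_re, Complex.conj_im]
    ring
  have hPQ : 1 ≤ (Complex.normSq (A 0 0) + Complex.normSq (A 0 1)) *
      (Complex.normSq (A 1 0) + Complex.normSq (A 1 1)) := by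
    rw [hlag, h2]
    have := Complex.normSq_nonneg (A 0 0 * star (A 1 0) + A 0 1 * star (A 1 1))
    linarith
  rw [hL]
  nlinarith [hPQ, Complex.normSq_nonneg (A 0 0), Complex.normSq_nonneg (A 0 1),
    Complex.normSq_nonneg (A 1 0), Complex.normSq_nonneg (A 1 1),
    sq_nonneg (Complex.normSq (A 0 0) + Complex.normSq (A 0 1)
      - Complex.normSq (A 1 0) - Complex.normSq (A 1 1))]

lemma Lr_PO (A : Matrix (Fin 2) (Fin 2) ℂ) (hA : A.det = 1) : LorentzPO (Lr A) :=
  ⟨Lr_lorentz_eq A hA, Lr_det A hA, Lr_00 A hA⟩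

theorem sl2_action_is_lorentz (A B : Matrix (Fin 2) (Fin 2) ℂ)
    (hA : A.det = 1) (hB : B.det = 1) :
    ∃ LA LB : Matrix (Fin 4) (Fin 4) ℝ, LorentzPO LA ∧ LorentzPO LB ∧
      ∀ ρ : Matrix (Fin 2 × Fin 2) (Fin 2 × Fin 2) ℂ, ρ.IsHermitian →
        Rmat ((A ⊗ₖ B) * ρ * (A ⊗ₖ B)ᴴ) = LA * Rmat ρ * LBᵀ := by
  refine ⟨Lr A, Lr B, Lr_PO A hA, Lr_PO B hB, fun ρ _ => ?_⟩
  ext i j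
  have hreA : ∀ i k, Lc A i k = ((Lr A i k : ℝ) : ℂ) := by
    intro i k; rw [← Lc_real]; rfl
  have hreB : ∀ i k, Lc B i k = ((Lr B i k : ℝ) : ℂ) := by
    intro i k; rw [← Lc_real]; rfl
  show ((((A ⊗ₖ B) * ρ * (A ⊗ₖ B)ᴴ) * (pauli i ⊗ₖ pauli j)).trace).re = _
  rw [trace_key, Complex.re_sum]
  have hterm : ∀ k l, ((Lc A i k * Lc B j l) * (ρ * (pauli k ⊗ₖ pauli l)).trace).re
      = Lr A i k * Lr B j l * Rmat ρ k l := by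
    intro k l
    rw [hreA, hreB, ← Complex.ofReal_mul, Complex.re_ofReal_mul]
    rfl
  calc ∑ k, (∑ l, (Lc A i k * Lc B j l) * (ρ * (pauli k ⊗ₖ pauli l)).trace).re
      = ∑ k, ∑ l, Lr A i k * Lr B j l * Rmat ρ k l := by
        refine Finset.sum_congr rfl fun k _ => ?_
        rw [Complex.re_sum]
        exact Finset.sum_congr rfl fun l _ => hterm k l
    _ = (Lr A * Rmat ρ * (Lr B)ᵀ) i j := by
        rw [Finset.sum_comm]
        simp only [Matrix.mul_apply, Matrix.transpose_apply, Finset.sum_mul]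
        exact Finset.sum_congr rfl fun l _ => Finset.sum_congr rfl fun k _ => by ring
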